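/- Let M be a smooth n-manifold and let σ, ν : M → ℝ^{n+2} be an immersion of M into ℍ^{n+1} with unit normal ν having small principal curvatures. Let p, q ∈ M with p ≠ q, and suppose p and q are joined by a unit-speed geodesic of the first fundamental form of σ. Then ⟨σ(q), σ(p) + ν(p)⟩ < −1 and ⟨σ(q), σ(p) − ν(p)⟩ < −1; that is, σ(q) lies in the interior of the concave side of each of the two horospheres tangent to the immersed hypersurface at σ(p). -/

import Mathlib

open scoped Manifold

/-- The Minkowski bilinear form on `ℝ^{n+2}`:
`⟨x,y⟩ = x₁y₁ + ⋯ + x_{n+1}y_{n+1} − x_{n+2}y_{n+2}`. -/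
noncomputable def mink (n : ℕ) (x y : Fin (n + 2) → ℝ) : ℝ :=
  (∑ i : Fin (n + 1), x i.castSucc * y i.castSucc) -
    x (Fin.last (n + 1)) * y (Fin.last (n + 1))

/-!
Put `γ = σ ∘ c` and let `ξ = σ(p) ± ν(p)`, a future null vector with `⟨σ(p), ξ⟩ = -1`. The
height `u(t) = ⟨γ(t), ξ⟩` satisfies `u(a) = -1`, `u'(a) = 0` and `u'' = u + k ⟨ν, ξ⟩`, where
`γ'' = γ + k ν` and `k = -⟨γ', (ν ∘ c)'⟩`. Small principal curvatures give `k² < 1`, and the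
reverse Cauchy–Schwarz inequalities of Minkowski space give `u < 0` and `|⟨ν, ξ⟩| ≤ |u|`.
Hence `u'' < 0` on `[a, b]`, so `u` decreases strictly and `u(b) < -1`.
-/

open Set

section Algebra

variable {n : ℕ}

lemma mink_comm (x y : Fin (n + 2) → ℝ) : mink n x y = mink n y x := by
  simp only [mink, mul_comm]

lemma mink_add_left (x y z : Fin (n + 2) → ℝ) :
    mink n (x + y) z = mink n x z + mink n y z := by
  simp only [mink, Pi.add_apply, add_mul, Finset.sum_add_distrib]; ring

lemma mink_smul_left (r : ℝ) (x y : Fin (n + 2) → ℝ) :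
    mink n (r • x) y = r * mink n x y := by
  simp only [mink, Pi.smul_apply, smul_eq_mul, mul_assoc, Finset.mul_sum, mul_sub]

lemma mink_add_right (x y z : Fin (n + 2) → ℝ) :
    mink n x (y + z) = mink n x y + mink n x z := by
  rw [mink_comm, mink_add_left, mink_comm y, mink_comm z]

lemma mink_smul_right (r : ℝ) (x y : Fin (n + 2) → ℝ) :
    mink n x (r • y) = r * mink n x y := by
  rw [mink_comm, mink_smul_left, mink_comm]

lemma mink_zero_right (x : Fin (n + 2) → ℝ) : mink n x 0 = 0 := by
  simpa using mink_smul_right 0 x 0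

lemma mink_zero_left (x : Fin (n + 2) → ℝ) : mink n 0 x = 0 := by
  rw [mink_comm, mink_zero_right]

/-- Cauchy–Schwarz for the Euclidean part `⟨x, y⟩ + x_{n+2} y_{n+2}` of the form. -/
lemma sq_mink_add_mul_last_le (x y : Fin (n + 2) → ℝ) :
    (mink n x y + x (Fin.last _) * y (Fin.last _)) ^ 2 ≤
      (mink n x x + x (Fin.last _) ^ 2) * (mink n y y + y (Fin.last _) ^ 2) := by
  simp only [mink, sub_add_cancel, ← pow_two]
  exact Finset.sum_mul_sq_le_sq_mul_sq _ _ _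

lemma mink_self_add_sq_last_nonneg (x : Fin (n + 2) → ℝ) :
    0 ≤ mink n x x + x (Fin.last _) ^ 2 := by
  simp only [mink, sub_add_cancel, ← pow_two]
  positivity

lemma mink_self_nonneg_of_orthogonal {g x : Fin (n + 2) → ℝ} (hg : mink n g g < 0)
    (hx : mink n x g = 0) : 0 ≤ mink n x x := by
  have hcs := sq_mink_add_mul_last_le x g
  have hx₀ := mink_self_add_sq_last_nonneg x
  have hg₀ := mink_self_add_sq_last_nonneg g
  rw [hx, zero_add] at hcs
  nlinarith [sq_nonneg (x (Fin.last _)), mul_nonneg hx₀ hg₀]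

lemma sq_mink_le_of_orthogonal {g x y : Fin (n + 2) → ℝ} (hg : mink n g g < 0)
    (hx : mink n x g = 0) (hy : mink n y g = 0) :
    mink n x y ^ 2 ≤ mink n x x * mink n y y := by
  have hquad : ∀ r : ℝ, 0 ≤ mink n y y * (r * r) + 2 * mink n x y * r + mink n x x := by
    intro r
    have hr : mink n (r • y + x) g = 0 := by
      rw [mink_add_left, mink_smul_left, hx, hy, mul_zero, add_zero]
    have := mink_self_nonneg_of_orthogonal hg hr
    simp only [mink_add_left, mink_add_right, mink_smul_left, mink_smul_right,
      mink_comm y x] at this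
    linarith
  have := discrim_le_zero hquad
  rw [discrim] at this
  linarith

lemma mink_neg_of_timelike_of_null {h ξ : Fin (n + 2) → ℝ} (hh : mink n h h < 0)
    (hhL : 0 < h (Fin.last _)) (hξ : mink n ξ ξ = 0) (hξL : 0 < ξ (Fin.last _)) :
    mink n h ξ < 0 := by
  have hcs := sq_mink_add_mul_last_le h ξ
  rw [hξ, zero_add] at hcs
  nlinarith [mul_pos hhL hξL, pow_pos hξL 2]

lemma last_pos_of_mink_neg {g ξ : Fin (n + 2) → ℝ} (hg : mink n g g < 0)
    (hgL : 0 < g (Fin.last _)) (hξ : mink n ξ ξ = 0) (hgξ : mink n g ξ < 0) :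
    0 < ξ (Fin.last _) := by
  have hcs := sq_mink_add_mul_last_le g ξ
  rw [hξ, zero_add] at hcs
  by_contra! hle
  nlinarith [mul_nonpos_of_nonneg_of_nonpos hgL.le hle, sq_nonneg (ξ (Fin.last _))]

/-- Project `ξ` onto `{g, N}ᗮ`, which is spacelike. -/
lemma sq_mink_le_of_null {g N ξ : Fin (n + 2) → ℝ} (hg : mink n g g = -1)
    (hN : mink n N N = 1) (hgN : mink n g N = 0) (hξ : mink n ξ ξ = 0) :
    mink n N ξ ^ 2 ≤ mink n g ξ ^ 2 := by
  set w := ξ + mink n g ξ • g - mink n N ξ • N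
  have hNg : mink n N g = 0 := by rw [mink_comm, hgN]
  have hw : mink n w g = 0 := by
    simp only [w, sub_eq_add_neg, ← neg_smul, mink_add_left, mink_smul_left, hg, hNg,
      mink_comm ξ g]
    ring
  have hww := mink_self_nonneg_of_orthogonal (by rw [hg]; norm_num) hw
  simp only [w, sub_eq_add_neg, ← neg_smul, mink_add_left, mink_add_right, mink_smul_left,
    mink_smul_right, mink_comm ξ g, mink_comm ξ N, hNg, hg, hN, hgN, hξ] at hww
  nlinarith

lemma mink_tangent_horosphere_center {g N : Fin (n + 2) → ℝ} {ε : ℝ} (hg : mink n g g = -1)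
    (hgL : 0 < g (Fin.last _)) (hN : mink n N N = 1) (hgN : mink n g N = 0) (hε : ε ^ 2 = 1) :
    mink n (g + ε • N) (g + ε • N) = 0 ∧ mink n g (g + ε • N) = -1 ∧
      0 < (g + ε • N) (Fin.last _) := by
  have hNg : mink n N g = 0 := by rw [mink_comm, hgN]
  have hnull : mink n (g + ε • N) (g + ε • N) = 0 := by
    simp only [mink_add_left, mink_add_right, mink_smul_left, mink_smul_right, hg, hN, hgN,
      hNg]
    linear_combination hε
  have hproj : mink n g (g + ε • N) = -1 := by
    rw [mink_add_right, mink_smul_right, hg, hgN, mul_zero, add_zero]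
  exact ⟨hnull, hproj,
    last_pos_of_mink_neg (by rw [hg]; norm_num) hgL hnull (by rw [hproj]; norm_num)⟩

end Algebra

section Calculus

variable {n : ℕ}

lemma hasDerivWithinAt_mink {f g : ℝ → Fin (n + 2) → ℝ} {f' g' : Fin (n + 2) → ℝ}
    {s : Set ℝ} {t : ℝ} (hf : HasDerivWithinAt f f' s t) (hg : HasDerivWithinAt g g' s t) :
    HasDerivWithinAt (fun u => mink n (f u) (g u)) (mink n f' (g t) + mink n (f t) g') s t := by
  have hsum := HasDerivWithinAt.fun_sum (u := Finset.univ) fun (i : Fin (n + 1)) _ =>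
    (hasDerivWithinAt_pi.1 hf i.castSucc).mul (hasDerivWithinAt_pi.1 hg i.castSucc)
  refine (hsum.sub ((hasDerivWithinAt_pi.1 hf (Fin.last _)).mul
    (hasDerivWithinAt_pi.1 hg (Fin.last _)))).congr_deriv ?_
  simp only [mink, Finset.sum_add_distrib]
  ring

lemma mink_deriv_add_eq_zero_of_const {f g : ℝ → Fin (n + 2) → ℝ}
    {f' g' : Fin (n + 2) → ℝ} {s : Set ℝ} {t C : ℝ} (hf : HasDerivWithinAt f f' s t)
    (hg : HasDerivWithinAt g g' s t) (hs : UniqueDiffWithinAt ℝ s t) (ht : t ∈ s)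
    (hC : ∀ u ∈ s, mink n (f u) (g u) = C) :
    mink n f' (g t) + mink n (f t) g' = 0 :=
  hs.eq_deriv _ (hasDerivWithinAt_mink hf hg) ((hasDerivWithinAt_const t s C).congr_of_mem hC ht)

lemma mink_deriv_self_eq_zero {f : ℝ → Fin (n + 2) → ℝ} {f' : Fin (n + 2) → ℝ}
    {s : Set ℝ} {t C : ℝ} (hf : HasDerivWithinAt f f' s t) (hs : UniqueDiffWithinAt ℝ s t)
    (ht : t ∈ s) (hC : ∀ u ∈ s, mink n (f u) (f u) = C) : mink n f' (f t) = 0 := by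
  have := mink_deriv_add_eq_zero_of_const hf hf hs ht hC
  rw [mink_comm (f t)] at this
  linarith

lemma strictAntiOn_Icc_of_deriv_left_eq_zero_of_second_deriv_neg {f f' f'' : ℝ → ℝ}
    {a b : ℝ} (hf : ∀ t ∈ Icc a b, HasDerivWithinAt f (f' t) (Icc a b) t)
    (hf' : ∀ t ∈ Icc a b, HasDerivWithinAt f' (f'' t) (Icc a b) t) (ha : f' a = 0)
    (hf'' : ∀ t ∈ Ioo a b, f'' t < 0) : StrictAntiOn f (Icc a b) := by
  have hderiv : ∀ {F F' : ℝ → ℝ}, (∀ t ∈ Icc a b, HasDerivWithinAt F (F' t) (Icc a b) t) →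
      ∀ t ∈ Ioo a b, deriv F t = F' t := fun hF t ht =>
    ((hF t (Ioo_subset_Icc_self ht)).hasDerivAt (Icc_mem_nhds ht.1 ht.2)).deriv
  have hanti' : StrictAntiOn f' (Icc a b) :=
    strictAntiOn_of_deriv_neg (convex_Icc a b) (fun t ht => (hf' t ht).continuousWithinAt)
      fun t ht => by
        rw [interior_Icc] at ht
        exact hderiv hf' t ht ▸ hf'' t ht
  refine strictAntiOn_of_deriv_neg (convex_Icc a b) (fun t ht => (hf t ht).continuousWithinAt)
    fun t ht => ?_
  rw [interior_Icc] at ht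
  rw [hderiv hf t ht, ← ha]
  exact hanti' (left_mem_Icc.2 (ht.1.trans ht.2).le) (Ioo_subset_Icc_self ht) ht.1

lemma hasDerivAt_comp_mfderiv {E H M F : Type*} [NormedAddCommGroup E] [NormedSpace ℝ E]
    [TopologicalSpace H] {I : ModelWithCorners ℝ E H} [TopologicalSpace M] [ChartedSpace H M]
    [NormedAddCommGroup F] [NormedSpace ℝ F] {f : M → F} {c : ℝ → M} {t : ℝ}
    (hf : MDifferentiableAt I 𝓘(ℝ, F) f (c t)) (hc : MDifferentiableAt 𝓘(ℝ) I c t) :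
    HasDerivAt (f ∘ c) (mfderiv I 𝓘(ℝ, F) f (c t) (mfderiv 𝓘(ℝ) I c t 1)) t := by
  convert (hf.comp t hc).differentiableAt.hasDerivAt
  rw [← fderiv_apply_one_eq_deriv, ← mfderiv_eq_fderiv, mfderiv_comp t hf hc]
  rfl

end Calculus

section Geodesic

variable {n : ℕ} {a b : ℝ} {γ γ' γ'' N N' : ℝ → Fin (n + 2) → ℝ}

lemma sq_mink_accel_normal_lt_one (hab : a < b)
    (hγ : ∀ t ∈ Icc a b, HasDerivWithinAt γ (γ' t) (Icc a b) t)
    (hγ' : ∀ t ∈ Icc a b, HasDerivWithinAt γ' (γ'' t) (Icc a b) t)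
    (hN : ∀ t ∈ Icc a b, HasDerivWithinAt N (N' t) (Icc a b) t)
    (hγγ : ∀ t ∈ Icc a b, mink n (γ t) (γ t) = -1)
    (hγN : ∀ t ∈ Icc a b, mink n (γ t) (N t) = 0)
    (hγ'N : ∀ t ∈ Icc a b, mink n (γ' t) (N t) = 0)
    (hspeed : ∀ t ∈ Icc a b, mink n (γ' t) (γ' t) = 1)
    (hsmall : ∀ t ∈ Icc a b, mink n (N' t) (N' t) < mink n (γ' t) (γ' t))
    {t : ℝ} (ht : t ∈ Icc a b) : mink n (γ'' t) (N t) ^ 2 < 1 := by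
  have hu := uniqueDiffOn_Icc hab t ht
  have hγ'γ : mink n (γ' t) (γ t) = 0 := mink_deriv_self_eq_zero (hγ t ht) hu ht hγγ
  have hN'γ : mink n (N' t) (γ t) = 0 := by
    have := mink_deriv_add_eq_zero_of_const (hγ t ht) (hN t ht) hu ht hγN
    rwa [hγ'N t ht, zero_add, mink_comm] at this
  have hk : mink n (γ'' t) (N t) = -mink n (γ' t) (N' t) := by
    have := mink_deriv_add_eq_zero_of_const (hγ' t ht) (hN t ht) hu ht hγ'N
    linarith
  have hcs := sq_mink_le_of_orthogonal (by rw [hγγ t ht]; norm_num) hγ'γ hN'γ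
  rw [hk, neg_sq]
  calc _ ≤ _ := hcs
    _ < 1 := by simpa only [hspeed t ht, one_mul] using hsmall t ht

lemma strictAntiOn_mink_null_of_geodesic
    (hγ : ∀ t ∈ Icc a b, HasDerivWithinAt γ (γ' t) (Icc a b) t)
    (hγ' : ∀ t ∈ Icc a b, HasDerivWithinAt γ' (γ'' t) (Icc a b) t)
    (hγγ : ∀ t ∈ Icc a b, mink n (γ t) (γ t) = -1)
    (hγL : ∀ t ∈ Icc a b, 0 < γ t (Fin.last _))
    (hNN : ∀ t ∈ Icc a b, mink n (N t) (N t) = 1)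
    (hγN : ∀ t ∈ Icc a b, mink n (γ t) (N t) = 0)
    (hgeo : ∀ t ∈ Icc a b, ∃ k : ℝ, k ^ 2 < 1 ∧ γ'' t = γ t + k • N t)
    {ξ : Fin (n + 2) → ℝ} (hξ : mink n ξ ξ = 0) (hξL : 0 < ξ (Fin.last _))
    (ha : mink n (γ' a) ξ = 0) : StrictAntiOn (fun t => mink n (γ t) ξ) (Icc a b) := by
  have hpair : ∀ {f : ℝ → Fin (n + 2) → ℝ} {f' t}, HasDerivWithinAt f f' (Icc a b) t →
      HasDerivWithinAt (fun u => mink n (f u) ξ) (mink n f' ξ) (Icc a b) t := fun hf => by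
    simpa only [mink_zero_right, add_zero] using
      hasDerivWithinAt_mink hf (hasDerivWithinAt_const _ _ ξ)
  refine strictAntiOn_Icc_of_deriv_left_eq_zero_of_second_deriv_neg
    (fun t ht => hpair (hγ t ht)) (fun t ht => hpair (hγ' t ht)) ha fun t ht => ?_
  replace ht := Ioo_subset_Icc_self ht
  obtain ⟨k, hk, hγ''⟩ := hgeo t ht
  have hU := mink_neg_of_timelike_of_null (by rw [hγγ t ht]; norm_num) (hγL t ht) hξ hξL
  have hW := sq_mink_le_of_null (hγγ t ht) (hNN t ht) (hγN t ht) hξ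
  rw [hγ'', mink_add_left, mink_smul_left]
  nlinarith [mul_le_mul_of_nonneg_left hW (sq_nonneg k),
    mul_lt_mul_of_pos_right hk (pow_pos (neg_pos.2 hU) 2)]

lemma mink_lt_neg_one_of_geodesic (hab : a < b)
    (hγ : ∀ t ∈ Icc a b, HasDerivWithinAt γ (γ' t) (Icc a b) t)
    (hγ' : ∀ t ∈ Icc a b, HasDerivWithinAt γ' (γ'' t) (Icc a b) t)
    (hN : ∀ t ∈ Icc a b, HasDerivWithinAt N (N' t) (Icc a b) t)
    (hγγ : ∀ t ∈ Icc a b, mink n (γ t) (γ t) = -1)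
    (hγL : ∀ t ∈ Icc a b, 0 < γ t (Fin.last _))
    (hNN : ∀ t ∈ Icc a b, mink n (N t) (N t) = 1)
    (hγN : ∀ t ∈ Icc a b, mink n (γ t) (N t) = 0)
    (hγ'N : ∀ t ∈ Icc a b, mink n (γ' t) (N t) = 0)
    (hspeed : ∀ t ∈ Icc a b, mink n (γ' t) (γ' t) = 1)
    (hsmall : ∀ t ∈ Icc a b, mink n (N' t) (N' t) < mink n (γ' t) (γ' t))
    (hgeo : ∀ t ∈ Icc a b, ∃ k : ℝ, γ'' t - γ t = k • N t) {ε : ℝ} (hε : ε ^ 2 = 1) :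
    mink n (γ b) (γ a + ε • N a) < -1 := by
  have hk t (ht : t ∈ Icc a b) : ∃ k : ℝ, k ^ 2 < 1 ∧ γ'' t = γ t + k • N t := by
    obtain ⟨k, hk⟩ := hgeo t ht
    refine ⟨k, ?_, by rw [← hk, add_sub_cancel]⟩
    have hkN : mink n (γ'' t) (N t) = k := by
      rw [← sub_add_cancel (γ'' t) (γ t), hk, mink_add_left, mink_smul_left, hNN t ht,
        hγN t ht, mul_one, add_zero]
    exact hkN ▸ sq_mink_accel_normal_lt_one hab hγ hγ' hN hγγ hγN hγ'N hspeed hsmall ht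
  have ha : a ∈ Icc a b := left_mem_Icc.2 hab.le
  obtain ⟨hnull, hproj, hfuture⟩ :=
    mink_tangent_horosphere_center (hγγ a ha) (hγL a ha) (hNN a ha) (hγN a ha) hε
  have hγ'ξ : mink n (γ' a) (γ a + ε • N a) = 0 := by
    rw [mink_add_right, mink_smul_right, hγ'N a ha,
      mink_deriv_self_eq_zero (hγ a ha) (uniqueDiffOn_Icc hab a ha) ha hγγ, mul_zero, add_zero]
  simpa only [hproj] using strictAntiOn_mink_null_of_geodesic hγ hγ' hγγ hγL hNN hγN hk hnull
    hfuture hγ'ξ ha (right_mem_Icc.2 hab.le) hab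

end Geodesic

theorem concave_side_of_tangent_horospheres_general
    {n : ℕ} {M : Type*} [TopologicalSpace M]
    [ChartedSpace (EuclideanSpace ℝ (Fin n)) M]
    (σ ν : M → Fin (n + 2) → ℝ)
    (hσ : ContMDiff (𝓡 n) 𝓘(ℝ, Fin (n + 2) → ℝ) (⊤ : ℕ∞) σ)
    (hν : ContMDiff (𝓡 n) 𝓘(ℝ, Fin (n + 2) → ℝ) (⊤ : ℕ∞) ν)
    (hσσ : ∀ p, mink n (σ p) (σ p) = -1)
    (hpos : ∀ p, 0 < σ p (Fin.last (n + 1)))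
    (hνν : ∀ p, mink n (ν p) (ν p) = 1)
    (hσν : ∀ p, mink n (σ p) (ν p) = 0)
    (hnormal : ∀ p (v : EuclideanSpace ℝ (Fin n)),
      mink n (mfderiv (𝓡 n) 𝓘(ℝ, Fin (n + 2) → ℝ) σ p v) (ν p) = 0)
    (hsmall : ∀ p (v : EuclideanSpace ℝ (Fin n)), v ≠ 0 →
      mink n (mfderiv (𝓡 n) 𝓘(ℝ, Fin (n + 2) → ℝ) ν p v)
          (mfderiv (𝓡 n) 𝓘(ℝ, Fin (n + 2) → ℝ) ν p v) <
        mink n (mfderiv (𝓡 n) 𝓘(ℝ, Fin (n + 2) → ℝ) σ p v)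
          (mfderiv (𝓡 n) 𝓘(ℝ, Fin (n + 2) → ℝ) σ p v))
    (p q : M)
    (a b : ℝ) (hab : a < b) (c : ℝ → M)
    (hc : ContMDiff 𝓘(ℝ, ℝ) (𝓡 n) (⊤ : ℕ∞) c)
    (hca : c a = p) (hcb : c b = q)
    (γ' γ'' : ℝ → Fin (n + 2) → ℝ)
    (hd1 : ∀ t ∈ Set.Icc a b,
      HasDerivWithinAt (fun s => σ (c s)) (γ' t) (Set.Icc a b) t)
    (hd2 : ∀ t ∈ Set.Icc a b, HasDerivWithinAt γ' (γ'' t) (Set.Icc a b) t)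
    (hspeed : ∀ t ∈ Set.Icc a b, mink n (γ' t) (γ' t) = 1)
    (hgeo : ∀ t ∈ Set.Icc a b, ∃ k : ℝ, γ'' t - σ (c t) = k • ν (c t)) :
    mink n (σ q) (σ p + ν p) < -1 ∧ mink n (σ q) (σ p - ν p) < -1 := by
  subst hca hcb
  set v : ℝ → EuclideanSpace ℝ (Fin n) := fun t => mfderiv 𝓘(ℝ) (𝓡 n) c t 1
  have hσc t : HasDerivAt (σ ∘ c) (mfderiv (𝓡 n) 𝓘(ℝ, Fin (n + 2) → ℝ) σ (c t) (v t)) t :=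
    hasDerivAt_comp_mfderiv (hσ.mdifferentiableAt (by simp)) (hc.mdifferentiableAt (by simp))
  have hνc t : HasDerivAt (ν ∘ c) (mfderiv (𝓡 n) 𝓘(ℝ, Fin (n + 2) → ℝ) ν (c t) (v t)) t :=
    hasDerivAt_comp_mfderiv (hν.mdifferentiableAt (by simp)) (hc.mdifferentiableAt (by simp))
  have hvel : ∀ t ∈ Icc a b, γ' t = mfderiv (𝓡 n) 𝓘(ℝ, Fin (n + 2) → ℝ) σ (c t) (v t) :=
    fun t ht => (uniqueDiffOn_Icc hab t ht).eq_deriv _ (hd1 t ht) (hσc t).hasDerivWithinAt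
  have hshape t (ht : t ∈ Icc a b) : mink n (mfderiv (𝓡 n) 𝓘(ℝ, Fin (n + 2) → ℝ) ν (c t) (v t))
      (mfderiv (𝓡 n) 𝓘(ℝ, Fin (n + 2) → ℝ) ν (c t) (v t)) < mink n (γ' t) (γ' t) := by
    rw [hvel t ht]
    refine hsmall _ _ fun hv => ?_
    have hzero : γ' t = 0 := by rw [hvel t ht, hv]; exact map_zero _
    have := hspeed t ht
    rw [hzero, mink_zero_left] at this
    exact zero_ne_one this
  have hside (ε : ℝ) (hε : ε ^ 2 = 1) : mink n (σ (c b)) (σ (c a) + ε • ν (c a)) < -1 :=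
    mink_lt_neg_one_of_geodesic hab hd1 hd2 (fun t _ => (hνc t).hasDerivWithinAt)
      (fun t _ => hσσ _) (fun t _ => hpos _) (fun t _ => hνν _) (fun t _ => hσν _)
      (fun t ht => hvel t ht ▸ hnormal _ _) hspeed hshape hgeo hε
  exact ⟨by simpa using hside 1 (one_pow 2),
    by simpa [sub_eq_add_neg] using hside (-1) (by norm_num)⟩

/-- If `σ : M → ℍ^{n+1}` is an immersion with unit normal `ν` having small principal
curvatures, and `p ≠ q` are joined by a unit-speed geodesic of the first fundamental
form of `σ`, then `σ(q)` lies in the interior of the concave side of each of the two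
horospheres tangent to the hypersurface at `σ(p)`. -/
theorem concave_side_of_tangent_horospheres
    {n : ℕ} {M : Type*} [TopologicalSpace M]
    [ChartedSpace (EuclideanSpace ℝ (Fin n)) M]
    [IsManifold (𝓡 n) (⊤ : ℕ∞) M]
    (σ ν : M → Fin (n + 2) → ℝ)
    (hσ : ContMDiff (𝓡 n) 𝓘(ℝ, Fin (n + 2) → ℝ) (⊤ : ℕ∞) σ)
    (hν : ContMDiff (𝓡 n) 𝓘(ℝ, Fin (n + 2) → ℝ) (⊤ : ℕ∞) ν)
    (hσσ : ∀ p, mink n (σ p) (σ p) = -1)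
    (hpos : ∀ p, 0 < σ p (Fin.last (n + 1)))
    (hνν : ∀ p, mink n (ν p) (ν p) = 1)
    (hσν : ∀ p, mink n (σ p) (ν p) = 0)
    (himm : ∀ p, Function.Injective (mfderiv (𝓡 n) 𝓘(ℝ, Fin (n + 2) → ℝ) σ p))
    (hnormal : ∀ p (v : EuclideanSpace ℝ (Fin n)),
      mink n (mfderiv (𝓡 n) 𝓘(ℝ, Fin (n + 2) → ℝ) σ p v) (ν p) = 0)
    (hsmall : ∀ p (v : EuclideanSpace ℝ (Fin n)), v ≠ 0 →
      mink n (mfderiv (𝓡 n) 𝓘(ℝ, Fin (n + 2) → ℝ) ν p v)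
          (mfderiv (𝓡 n) 𝓘(ℝ, Fin (n + 2) → ℝ) ν p v) <
        mink n (mfderiv (𝓡 n) 𝓘(ℝ, Fin (n + 2) → ℝ) σ p v)
          (mfderiv (𝓡 n) 𝓘(ℝ, Fin (n + 2) → ℝ) σ p v))
    (p q : M) (hpq : p ≠ q)
    (a b : ℝ) (hab : a < b) (c : ℝ → M)
    (hc : ContMDiff 𝓘(ℝ, ℝ) (𝓡 n) (⊤ : ℕ∞) c)
    (hca : c a = p) (hcb : c b = q)
    (γ' γ'' : ℝ → Fin (n + 2) → ℝ)
    (hd1 : ∀ t ∈ Set.Icc a b,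
      HasDerivWithinAt (fun s => σ (c s)) (γ' t) (Set.Icc a b) t)
    (hd2 : ∀ t ∈ Set.Icc a b, HasDerivWithinAt γ' (γ'' t) (Set.Icc a b) t)
    (hspeed : ∀ t ∈ Set.Icc a b, mink n (γ' t) (γ' t) = 1)
    (hgeo : ∀ t ∈ Set.Icc a b, ∃ k : ℝ, γ'' t - σ (c t) = k • ν (c t)) :
    mink n (σ q) (σ p + ν p) < -1 ∧ mink n (σ q) (σ p - ν p) < -1 :=
  concave_side_of_tangent_horospheres_general σ ν hσ hν hσσ hpos hνν hσν hnormal hsmall p q a b hab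
    c hc hca hcb γ' γ'' hd1 hd2 hspeed hgeo
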